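/- arXiv:1912.12008 — 6 statements merged into one kernel-verified Lean document; each statement's English description precedes it below -/
import Mathlib

section
/- Let A be an m×n real matrix, C an m×c matrix, R an r×n matrix, and let X* = C†AR† (where † denotes Moore–Penrose pseudoinverse). Then for any c×r matrix X̃, ‖A − CX̃R‖_F² = ‖A − CX*R‖_F² + ‖C(X* − X̃)R‖_F². -/
open Matrix BigOperators

/-- Frobenius norm of a real matrix. -/
noncomputable def frob {m n : ℕ} (A : Matrix (Fin m) (Fin n) ℝ) : ℝ :=
  Real.sqrt (∑ i, ∑ j, (A i j) ^ 2)

/-- Spectral (operator ℓ2→ℓ2) norm of a real matrix. -/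
noncomputable def spec {m n : ℕ} (A : Matrix (Fin m) (Fin n) ℝ) : ℝ :=
  ‖LinearMap.toContinuousLinearMap (Matrix.toEuclideanLin A)‖

/-- `B` is the Moore–Penrose pseudoinverse of `A` (four Penrose conditions). -/
def IsMPInv {m n : ℕ} (A : Matrix (Fin m) (Fin n) ℝ) (B : Matrix (Fin n) (Fin m) ℝ) : Prop :=
  A * B * A = A ∧ B * A * B = B ∧ (A * B)ᵀ = A * B ∧ (B * A)ᵀ = B * A

lemma frob_sq {m n : ℕ} (A : Matrix (Fin m) (Fin n) ℝ) :
    frob A ^ 2 = ∑ i, ∑ j, (A i j) ^ 2 := by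
  apply Real.sq_sqrt
  exact Finset.sum_nonneg fun i _ => Finset.sum_nonneg fun j _ => sq_nonneg _

lemma ip_eq_trace {m n : ℕ} (U V : Matrix (Fin m) (Fin n) ℝ) :
    (∑ i, ∑ j, U i j * V i j) = (Uᵀ * V).trace := by
  simp only [Matrix.trace, Matrix.diag, Matrix.mul_apply, Matrix.transpose_apply]
  rw [Finset.sum_comm]

theorem stmt_0 {m n c r : ℕ} (A : Matrix (Fin m) (Fin n) ℝ)
    (C : Matrix (Fin m) (Fin c) ℝ) (R : Matrix (Fin r) (Fin n) ℝ)
    (Cd : Matrix (Fin c) (Fin m) ℝ) (Rd : Matrix (Fin n) (Fin r) ℝ)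
    (hC : IsMPInv C Cd) (hR : IsMPInv R Rd)
    (Xstar : Matrix (Fin c) (Fin r) ℝ) (hX : Xstar = Cd * A * Rd)
    (Xt : Matrix (Fin c) (Fin r) ℝ) :
    frob (A - C * Xt * R) ^ 2 =
      frob (A - C * Xstar * R) ^ 2 + frob (C * (Xstar - Xt) * R) ^ 2 := by
  set P : Matrix (Fin m) (Fin m) ℝ := C * Cd with hP
  set Q : Matrix (Fin n) (Fin n) ℝ := Rd * R with hQ
  obtain ⟨hC1, hC2, hC3, hC4⟩ := hC
  obtain ⟨hR1, hR2, hR3, hR4⟩ := hR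
  have hPC : P * C = C := by rw [hP, Matrix.mul_assoc] at *; exact hC1
  have hRQ : R * Q = R := by
    rw [hQ, ← Matrix.mul_assoc]; exact hR1
  set U : Matrix (Fin m) (Fin n) ℝ := A - C * Xstar * R with hU
  set V : Matrix (Fin m) (Fin n) ℝ := C * (Xstar - Xt) * R with hV
  -- decomposition
  have hdecomp : A - C * Xt * R = U + V := by
    rw [hU, hV, Matrix.mul_sub, Matrix.sub_mul]
    abel
  -- P U Q = 0
  have hPUQ : P * U * Q = 0 := by
    have h1 : P * (C * Xstar * R) * Q = C * Xstar * R := by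
      simp only [← Matrix.mul_assoc]
      rw [hPC, Matrix.mul_assoc, hRQ]
    have h2 : P * A * Q = C * Xstar * R := by
      simp only [hX, hP, hQ, ← Matrix.mul_assoc]
    rw [hU, Matrix.mul_sub, Matrix.sub_mul, h1, h2, sub_self]
  -- V = P * V * Q
  have hVPQ : P * V * Q = V := by
    rw [hV]
    simp only [← Matrix.mul_assoc]
    rw [hPC, Matrix.mul_assoc, hRQ]
  have hPs : Pᵀ = P := hC3
  have hQs : Qᵀ = Q := hR4
  have hQUP : Q * Uᵀ * P = 0 := by
    rw [Matrix.mul_assoc, ← hQs, ← hPs, ← Matrix.transpose_mul, ← Matrix.transpose_mul,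
      ← Matrix.mul_assoc]
    rw [Matrix.mul_assoc, ← hQ, hPUQ, Matrix.transpose_zero]
  -- cross term is zero
  have hcross : (∑ i, ∑ j, U i j * V i j) = 0 := by
    rw [ip_eq_trace, ← hVPQ]
    simp only [← Matrix.mul_assoc]
    rw [Matrix.trace_mul_comm]
    simp only [← Matrix.mul_assoc]
    rw [hQUP, Matrix.zero_mul, Matrix.trace_zero]
  rw [hdecomp, frob_sq, frob_sq, frob_sq]
  have expand : ∀ i j, ((U + V) i j) ^ 2 = U i j ^ 2 + 2 * (U i j * V i j) + V i j ^ 2 := by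
    intro i j
    simp only [Matrix.add_apply]
    ring
  simp only [expand, Finset.sum_add_distrib, ← Finset.mul_sum]
  rw [hcross]
  ring
end

section
/- Let A, C, R be matrices as above and X* = C†AR†. Then the trace of (A − CX*R)ᵀ C(X* − X̃)R equals 0 for any c×r matrix X̃. -/
open Matrix BigOperators

theorem stmt_1 {m n c r : ℕ} (A : Matrix (Fin m) (Fin n) ℝ)
    (C : Matrix (Fin m) (Fin c) ℝ) (R : Matrix (Fin r) (Fin n) ℝ)
    (Cd : Matrix (Fin c) (Fin m) ℝ) (Rd : Matrix (Fin n) (Fin r) ℝ)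
    (hC : IsMPInv C Cd) (hR : IsMPInv R Rd)
    (Xstar : Matrix (Fin c) (Fin r) ℝ) (hX : Xstar = Cd * A * Rd)
    (Xt : Matrix (Fin c) (Fin r) ℝ) :
    Matrix.trace ((A - C * Xstar * R)ᵀ * (C * (Xstar - Xt) * R)) = 0 := by
  obtain ⟨hC1, _, hC3, _⟩ := hC
  obtain ⟨hR1, _, _, hR4⟩ := hR
  have h1 : Rᵀ * Rdᵀ = Rd * R := by rw [← Matrix.transpose_mul, hR4]
  have h2 : Cdᵀ * Cᵀ = C * Cd := by rw [← Matrix.transpose_mul, hC3]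
  have key : R * (A - C * Xstar * R)ᵀ * C = 0 := by
    subst hX
    have : R * (Rᵀ * (Rdᵀ * (Aᵀ * (Cdᵀ * Cᵀ)))) * C = R * Aᵀ * C := by
      calc R * (Rᵀ * (Rdᵀ * (Aᵀ * (Cdᵀ * Cᵀ)))) * C
          = (R * (Rᵀ * Rdᵀ)) * Aᵀ * ((Cdᵀ * Cᵀ) * C) := by
            simp only [Matrix.mul_assoc]
        _ = (R * Rd * R) * Aᵀ * (C * Cd * C) := by
            rw [h1, h2]; simp only [Matrix.mul_assoc]
        _ = R * Aᵀ * C := by rw [hR1, hC1]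
    simp only [Matrix.transpose_sub, Matrix.transpose_mul, Matrix.sub_mul,
      Matrix.mul_sub, Matrix.mul_assoc] at this ⊢
    rw [this, sub_self]
  calc Matrix.trace ((A - C * Xstar * R)ᵀ * (C * (Xstar - Xt) * R))
      = Matrix.trace ((Xstar - Xt) * (R * (A - C * Xstar * R)ᵀ * C)) := by
        rw [Matrix.trace_mul_comm, Matrix.mul_assoc, Matrix.mul_assoc,
          Matrix.trace_mul_comm, Matrix.mul_assoc]
    _ = 0 := by rw [key, Matrix.mul_zero, Matrix.trace_zero]
end

section
/- The matrix X* = C†AR† is a minimizer of the function X ↦ ‖A − CXR‖_F over all c×r matrices X. -/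
open Matrix BigOperators

lemma inner_trace {m n : ℕ} (D E : Matrix (Fin m) (Fin n) ℝ) :
    ∑ i, ∑ j, D i j * E i j = (Dᵀ * E).trace := by
  simp only [Matrix.trace, Matrix.diag, Matrix.mul_apply, Matrix.transpose_apply]
  rw [Finset.sum_comm]

theorem stmt_2 {m n c r : ℕ} (A : Matrix (Fin m) (Fin n) ℝ)
    (C : Matrix (Fin m) (Fin c) ℝ) (R : Matrix (Fin r) (Fin n) ℝ)
    (Cd : Matrix (Fin c) (Fin m) ℝ) (Rd : Matrix (Fin n) (Fin r) ℝ)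
    (hC : IsMPInv C Cd) (hR : IsMPInv R Rd) :
    ∀ X : Matrix (Fin c) (Fin r) ℝ,
      frob (A - C * (Cd * A * Rd) * R) ≤ frob (A - C * X * R) := by
  intro X
  obtain ⟨hC1, hC2, hC3, hC4⟩ := hC
  obtain ⟨hR1, hR2, hR3, hR4⟩ := hR
  set P : Matrix (Fin m) (Fin m) ℝ := C * Cd with hP
  set Q : Matrix (Fin n) (Fin n) ℝ := Rd * R with hQ
  -- after `set`, hC1 : P * C = C and hR2 : Q * Rd = Rd
  have hPP : P * P = P := by rw [hP, ← Matrix.mul_assoc, hC1]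
  have hQQ : Q * Q = Q := by rw [hQ, ← Matrix.mul_assoc, hR2]
  have hPT : Pᵀ = P := hC3
  have hQT : Qᵀ = Q := hR4
  have hRQ : R * Q = R := by rw [hQ, ← Matrix.mul_assoc, hR1]
  set D : Matrix (Fin m) (Fin n) ℝ := A - P * A * Q with hD
  set E : Matrix (Fin m) (Fin n) ℝ := P * A * Q - C * X * R with hE
  have hstar : A - C * (Cd * A * Rd) * R = D := by
    rw [hD, hP, hQ]
    congr 1
    simp only [Matrix.mul_assoc]
  have hsum : A - C * X * R = D + E := by rw [hD, hE, sub_add_sub_cancel]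
  have key : P * (P * A * Q) * Q = P * A * Q := by
    have h1 : P * (P * A * Q) = P * A * Q := by
      rw [← Matrix.mul_assoc P (P * A) Q, ← Matrix.mul_assoc P P A, hPP]
    rw [h1, Matrix.mul_assoc (P * A) Q Q, hQQ]
  have hPDQ : P * D * Q = 0 := by
    rw [hD, Matrix.mul_sub, Matrix.sub_mul, key, sub_self]
  have hE' : P * E * Q = E := by
    rw [hE, Matrix.mul_sub, Matrix.sub_mul, key]
    have h2 : P * (C * X * R) = C * X * R := by
      rw [← Matrix.mul_assoc P (C * X) R, ← Matrix.mul_assoc P C X, hC1]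
    rw [h2, Matrix.mul_assoc (C * X) R Q, hRQ]
  have horth : ∑ i, ∑ j, D i j * E i j = 0 := by
    rw [inner_trace]
    have h0 : Dᵀ * E = Dᵀ * P * E * Q := by
      conv_lhs => rw [← hE']
      rw [← Matrix.mul_assoc Dᵀ (P * E) Q, ← Matrix.mul_assoc Dᵀ P E]
    rw [h0, Matrix.trace_mul_comm]
    have h1 : Q * (Dᵀ * P * E) = (Q * Dᵀ * P) * E := by
      rw [← Matrix.mul_assoc Q (Dᵀ * P) E, ← Matrix.mul_assoc Q Dᵀ P]
    rw [h1]
    have hz : Q * Dᵀ * P = 0 := by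
      have : Q * Dᵀ * P = (Pᵀ * D * Qᵀ)ᵀ := by
        simp [Matrix.transpose_mul, Matrix.mul_assoc]
      rw [this, hPT, hQT, hPDQ]
      simp
    rw [hz]
    simp
  rw [hstar, hsum]
  unfold frob
  apply Real.sqrt_le_sqrt
  have hexp : ∑ i, ∑ j, ((D + E) i j) ^ 2
      = (∑ i, ∑ j, (D i j) ^ 2) + 2 * (∑ i, ∑ j, D i j * E i j)
        + ∑ i, ∑ j, (E i j) ^ 2 := by
    have h : ∀ i j, ((D + E) i j) ^ 2
        = (D i j) ^ 2 + 2 * (D i j * E i j) + (E i j) ^ 2 := by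
      intro i j; simp only [Matrix.add_apply]; ring
    simp_rw [h, Finset.sum_add_distrib, Finset.mul_sum]
  rw [hexp, horth]
  have hEnn : 0 ≤ ∑ i, ∑ j, (E i j) ^ 2 :=
    Finset.sum_nonneg fun i _ => Finset.sum_nonneg fun j _ => sq_nonneg _
  linarith
end

section
/- Let C = U_C Σ_C V_Cᵀ be a condensed (rank-revealing) SVD of C ∈ ℝ^{m×c}, so Σ_C V_Cᵀ has full row rank. Let S_C be a matrix such that S_C U_C has full column rank. Then (S_C C)† = (Σ_C V_Cᵀ)† (S_C U_C)†, and consequently C (S_C C)† = U_C (S_C U_C)†. -/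
open Matrix BigOperators

lemma mp_unique {m n : ℕ} {A : Matrix (Fin m) (Fin n) ℝ} {B B' : Matrix (Fin n) (Fin m) ℝ}
    (h : IsMPInv A B) (h' : IsMPInv A B') : B = B' := by
  obtain ⟨h1, h2, h3, h4⟩ := h
  obtain ⟨h1', h2', h3', h4'⟩ := h'
  have hAB : A * B = A * B' := by
    calc A * B = (A * B' * A) * B := by rw [h1']
    _ = (A * B') * (A * B) := by simp [Matrix.mul_assoc]
    _ = (A * B')ᵀ * (A * B)ᵀ := by rw [h3, h3']
    _ = B'ᵀ * ((A * B * A)ᵀ) := by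
        simp [Matrix.transpose_mul, Matrix.mul_assoc]
    _ = B'ᵀ * Aᵀ := by rw [h1]
    _ = (A * B')ᵀ := by rw [Matrix.transpose_mul]
    _ = A * B' := h3'
  have hBA : B * A = B' * A := by
    calc B * A = B * (A * B' * A) := by rw [h1']
    _ = (B * A) * (B' * A) := by simp [Matrix.mul_assoc]
    _ = (B * A)ᵀ * (B' * A)ᵀ := by rw [h4, h4']
    _ = ((A * B * A)ᵀ) * B'ᵀ := by
        simp [Matrix.transpose_mul, Matrix.mul_assoc]
    _ = Aᵀ * B'ᵀ := by rw [h1]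
    _ = (B' * A)ᵀ := by rw [Matrix.transpose_mul]
    _ = B' * A := h4'
  calc B = B * A * B := h2.symm
  _ = B' * A * B := by rw [hBA]
  _ = B' * (A * B') := by rw [Matrix.mul_assoc, hAB]
  _ = B' := by rw [← Matrix.mul_assoc, h2']

lemma isUnit_of_rank_eq {n : ℕ} (M : Matrix (Fin n) (Fin n) ℝ) (h : M.rank = n) :
    IsUnit M := by
  rw [← Matrix.mulVec_surjective_iff_isUnit]
  have hr : LinearMap.range M.mulVecLin = ⊤ := by
    apply Submodule.eq_top_of_finrank_eq
    rw [show Module.finrank ℝ (LinearMap.range M.mulVecLin) = M.rank from rfl, h,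
      Module.finrank_fintype_fun_eq_card, Fintype.card_fin]
  intro v
  obtain ⟨w, hw⟩ := LinearMap.range_eq_top.mp hr v
  exact ⟨w, hw⟩

theorem stmt_7 {m c s ρ : ℕ} (C : Matrix (Fin m) (Fin c) ℝ)
    (UC : Matrix (Fin m) (Fin ρ) ℝ) (SigC : Matrix (Fin ρ) (Fin ρ) ℝ)
    (VC : Matrix (Fin c) (Fin ρ) ℝ)
    (hUC : UCᵀ * UC = 1) (hVC : VCᵀ * VC = 1)
    (hSigdiag : SigC.IsDiag) (hSigunit : IsUnit SigC)
    (hC : C = UC * SigC * VCᵀ)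
    (SC : Matrix (Fin s) (Fin m) ℝ) (hrank : (SC * UC).rank = ρ)
    (P1 : Matrix (Fin c) (Fin s) ℝ) (hP1 : IsMPInv (SC * C) P1)
    (P2 : Matrix (Fin c) (Fin ρ) ℝ) (hP2 : IsMPInv (SigC * VCᵀ) P2)
    (P3 : Matrix (Fin ρ) (Fin s) ℝ) (hP3 : IsMPInv (SC * UC) P3) :
    P1 = P2 * P3 ∧ C * P1 = UC * P3 := by
  set L := SC * UC with hL
  set R := SigC * VCᵀ with hR
  obtain ⟨h21, h22, h23, h24⟩ := hP2
  obtain ⟨h31, h32, h33, h34⟩ := hP3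
  -- R has full row rank: R * P2 = 1
  have hRRT : IsUnit (R * Rᵀ) := by
    have : R * Rᵀ = SigC * SigCᵀ := by
      rw [hR, Matrix.transpose_mul, Matrix.transpose_transpose]
      rw [Matrix.mul_assoc, ← Matrix.mul_assoc VCᵀ VC SigCᵀ, hVC, Matrix.one_mul]
    rw [this]
    exact hSigunit.mul ((Matrix.isUnit_iff_isUnit_det _).mpr
      (by rw [Matrix.det_transpose]; exact (Matrix.isUnit_iff_isUnit_det _).mp hSigunit))
  have hRP2 : R * P2 = 1 := by
    apply hRRT.mul_right_cancel
    rw [Matrix.one_mul]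
    calc R * P2 * (R * Rᵀ) = (R * P2 * R) * Rᵀ := by simp [Matrix.mul_assoc]
    _ = R * Rᵀ := by rw [h21]
  -- L has full column rank: P3 * L = 1
  have hLTL : IsUnit (Lᵀ * L) := by
    apply isUnit_of_rank_eq
    rw [Matrix.rank_transpose_mul_self, hrank]
  have hP3L : P3 * L = 1 := by
    apply hLTL.mul_left_cancel
    rw [Matrix.mul_one]
    calc Lᵀ * L * (P3 * L) = Lᵀ * (L * P3 * L) := by simp [Matrix.mul_assoc]
    _ = Lᵀ * L := by rw [h31]
  -- SC * C = L * R
  have hSCC : SC * C = L * R := by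
    rw [hC, hL, hR]; simp [Matrix.mul_assoc]
  -- P2 * P3 is an MP inverse of SC * C
  have hMP : IsMPInv (SC * C) (P2 * P3) := by
    rw [hSCC]
    refine ⟨?_, ?_, ?_, ?_⟩
    · calc L * R * (P2 * P3) * (L * R) = L * (R * P2) * (P3 * L) * R := by
            simp [Matrix.mul_assoc]
      _ = L * R := by rw [hRP2, hP3L, Matrix.mul_one, Matrix.mul_one]
    · calc P2 * P3 * (L * R) * (P2 * P3) = P2 * ((P3 * L) * (R * P2)) * P3 := by
            simp [Matrix.mul_assoc]
      _ = P2 * P3 := by rw [hRP2, hP3L, Matrix.one_mul, Matrix.mul_one]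
    · have : L * R * (P2 * P3) = L * P3 := by
        calc L * R * (P2 * P3) = L * (R * P2) * P3 := by simp [Matrix.mul_assoc]
        _ = L * P3 := by rw [hRP2, Matrix.mul_one]
      rw [this]; exact h33
    · have : P2 * P3 * (L * R) = P2 * R := by
        calc P2 * P3 * (L * R) = P2 * (P3 * L) * R := by simp [Matrix.mul_assoc]
        _ = P2 * R := by rw [hP3L, Matrix.mul_one]
      rw [this]; exact h24
  have hmain : P1 = P2 * P3 := mp_unique hP1 hMP
  refine ⟨hmain, ?_⟩
  rw [hmain, hC]
  calc UC * SigC * VCᵀ * (P2 * P3) = UC * (R * P2) * P3 := by simp [hR, Matrix.mul_assoc]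
  _ = UC * P3 := by rw [hRP2, Matrix.mul_one]
end

section
/- Let A ∈ ℝ^{m×n}, P an orthogonal projection on ℝ^m that is left SF(ε,k) for A. Then ‖A_k − P A_k‖_F² ≤ ε‖A − A_k‖_F². -/
open Matrix BigOperators

lemma sq_sum_mulVec_le {m n : ℕ} (M : Matrix (Fin m) (Fin n) ℝ) (v : Fin n → ℝ) :
    ∑ i, (M.mulVec v i) ^ 2 ≤ spec M ^ 2 * ∑ j, (v j) ^ 2 := by
  set x : EuclideanSpace ℝ (Fin n) := (WithLp.equiv 2 (Fin n → ℝ)).symm v with hx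
  have hnx : ‖x‖ ^ 2 = ∑ j, (v j) ^ 2 := by
    rw [EuclideanSpace.norm_eq, Real.sq_sqrt (Finset.sum_nonneg fun j _ => sq_nonneg _)]
    simp [hx, sq_abs]
  have hy : (LinearMap.toContinuousLinearMap (Matrix.toEuclideanLin M)) x
      = (WithLp.equiv 2 (Fin m → ℝ)).symm (M.mulVec v) := rfl
  have hny : ‖(LinearMap.toContinuousLinearMap (Matrix.toEuclideanLin M)) x‖ ^ 2
      = ∑ i, (M.mulVec v i) ^ 2 := by
    rw [hy, EuclideanSpace.norm_eq, Real.sq_sqrt (Finset.sum_nonneg fun j _ => sq_nonneg _)]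
    simp [sq_abs]
  have hle := ContinuousLinearMap.le_opNorm
      (LinearMap.toContinuousLinearMap (Matrix.toEuclideanLin M)) x
  have h2 : ‖(LinearMap.toContinuousLinearMap (Matrix.toEuclideanLin M)) x‖ ^ 2
      ≤ (spec M * ‖x‖) ^ 2 := by
    apply pow_le_pow_left₀ (norm_nonneg _) hle
  rw [hny, mul_pow, hnx] at h2
  exact h2

lemma sum_sq_eq_trace {m n : ℕ} (C : Matrix (Fin m) (Fin n) ℝ) :
    ∑ i, ∑ j, (C i j) ^ 2 = Matrix.trace (Cᵀ * C) := by
  rw [Matrix.trace]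
  rw [Finset.sum_comm]
  refine Finset.sum_congr rfl fun j _ => ?_
  simp [Matrix.mul_apply, Matrix.diag, Matrix.transpose_apply, sq]

theorem stmt_13 {m n k : ℕ} (hk : 0 < k) (ε : ℝ) (hε : 0 < ε)
    (A Ak : Matrix (Fin m) (Fin n) ℝ)
    (Vk : Matrix (Fin n) (Fin k) ℝ) (hVk : Vkᵀ * Vk = 1)
    (hAkV : Ak = A * (Vk * Vkᵀ)) (hrank : Ak.rank ≤ k)
    (P : Matrix (Fin m) (Fin m) ℝ) (hP : P * P = P ∧ Pᵀ = P)
    (hPSF : spec ((1 - P) * A) ^ 2 ≤ (ε / (k : ℝ)) * frob (A - Ak) ^ 2) :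
    frob (Ak - P * Ak) ^ 2 ≤ ε * frob (A - Ak) ^ 2 := by
  set M : Matrix (Fin m) (Fin n) ℝ := (1 - P) * A with hM
  set B : Matrix (Fin m) (Fin k) ℝ := M * Vk with hB
  have hdecomp : Ak - P * Ak = B * Vkᵀ := by
    rw [hB, hM, hAkV]
    simp [Matrix.sub_mul, Matrix.mul_assoc]
  -- Frobenius² of B*Vkᵀ equals that of B
  have htr : ∑ i, ∑ j, ((B * Vkᵀ) i j) ^ 2 = ∑ i, ∑ l, (B i l) ^ 2 := by
    rw [sum_sq_eq_trace, sum_sq_eq_trace]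
    have : (B * Vkᵀ)ᵀ * (B * Vkᵀ) = Vk * (Bᵀ * B * Vkᵀ) := by
      rw [Matrix.transpose_mul, Matrix.transpose_transpose]
      simp [Matrix.mul_assoc]
    rw [this, Matrix.trace_mul_comm, Matrix.mul_assoc (Bᵀ * B), hVk, Matrix.mul_one]
  -- each column sum bound
  have hcol : ∀ l : Fin k, ∑ i, (B i l) ^ 2 ≤ spec M ^ 2 := by
    intro l
    have hBv : ∀ i, B i l = M.mulVec (fun j => Vk j l) i := by
      intro i; simp [hB, Matrix.mul_apply, Matrix.mulVec, dotProduct]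
    have hunit : ∑ j, (Vk j l) ^ 2 = 1 := by
      have := congrFun (congrFun hVk l) l
      simp [Matrix.mul_apply, Matrix.one_apply, Matrix.transpose_apply, sq] at this ⊢
      rw [this]
    calc ∑ i, (B i l) ^ 2 = ∑ i, (M.mulVec (fun j => Vk j l) i) ^ 2 := by
          exact Finset.sum_congr rfl fun i _ => by rw [hBv i]
      _ ≤ spec M ^ 2 * ∑ j, (Vk j l) ^ 2 := sq_sum_mulVec_le M _
      _ = spec M ^ 2 := by rw [hunit, mul_one]
  have hmain : frob (Ak - P * Ak) ^ 2 ≤ (k : ℝ) * spec M ^ 2 := by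
    rw [frob_sq, hdecomp, htr, Finset.sum_comm]
    calc ∑ l : Fin k, ∑ i, (B i l) ^ 2 ≤ ∑ _l : Fin k, spec M ^ 2 :=
          Finset.sum_le_sum fun l _ => hcol l
      _ = (k : ℝ) * spec M ^ 2 := by simp [mul_comm]
  have hk' : (k : ℝ) ≠ 0 := Nat.cast_ne_zero.mpr hk.ne'
  calc frob (Ak - P * Ak) ^ 2 ≤ (k : ℝ) * spec M ^ 2 := hmain
    _ ≤ (k : ℝ) * ((ε / (k : ℝ)) * frob (A - Ak) ^ 2) := by
        apply mul_le_mul_of_nonneg_left hPSF (Nat.cast_nonneg k)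
    _ = ε * frob (A - Ak) ^ 2 := by field_simp
end

section
/- Let A ∈ ℝ^{m×n}, let P, Q be orthogonal projections that are left and right SF(ε,k) for A respectively, and let A_k be the best rank-k approximation of A. Then tr((A − A_k)ᵀ(I − P)A_k Q) ≤ ε‖A − A_k‖_F². -/
open Matrix BigOperators

lemma dot_mul_self' {n m : ℕ} (R : Matrix (Fin m) (Fin n) ℝ) (v : Fin n → ℝ) :
    v ⬝ᵥ (Rᵀ*R).mulVec v = R.mulVec v ⬝ᵥ R.mulVec v := by
  rw [← Matrix.mulVec_mulVec, Matrix.dotProduct_mulVec, Matrix.vecMul_transpose]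

lemma proj_con' {n : ℕ} {R : Matrix (Fin n) (Fin n) ℝ} (h1 : R*R = R) (h2 : Rᵀ = R)
    (v : Fin n → ℝ) : R.mulVec v ⬝ᵥ R.mulVec v ≤ v ⬝ᵥ v := by
  have hRR : Rᵀ * R = R := by rw [h2, h1]
  have hS0 : (1 - R) * (1 - R) = 1 - R := by
    rw [sub_mul, one_mul, mul_sub, mul_one, h1, sub_self, sub_zero]
  have hS1 : (1 - R)ᵀ * (1 - R) = 1 - R := by
    rw [transpose_sub, transpose_one, h2, hS0]
  have e1 := dot_mul_self' R v; rw [hRR] at e1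
  have e2 := dot_mul_self' (1 - R) v; rw [hS1] at e2
  have nn : 0 ≤ (1 - R).mulVec v ⬝ᵥ (1 - R).mulVec v :=
    Finset.sum_nonneg fun j _ => mul_self_nonneg _
  have expand : v ⬝ᵥ (1 - R).mulVec v = v ⬝ᵥ v - v ⬝ᵥ R.mulVec v := by
    rw [sub_mulVec, one_mulVec, dotProduct_sub]
  linarith [nn, e1, e2, expand]

lemma spec_mulVec' {m n : ℕ} (M : Matrix (Fin m) (Fin n) ℝ) (v : Fin n → ℝ) :
    ∑ i, (M.mulVec v i)^2 ≤ spec M ^ 2 * ∑ j, (v j)^2 := by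
  set x : EuclideanSpace ℝ (Fin n) := (EuclideanSpace.equiv (Fin n) ℝ).symm v with hx
  have h := (LinearMap.toContinuousLinearMap (Matrix.toEuclideanLin M)).le_opNorm x
  have hMx : (LinearMap.toContinuousLinearMap (Matrix.toEuclideanLin M)) x
      = (EuclideanSpace.equiv (Fin m) ℝ).symm (M.mulVec v) := rfl
  rw [hMx] at h
  have e1 : ‖(EuclideanSpace.equiv (Fin m) ℝ).symm (M.mulVec v)‖
      = Real.sqrt (∑ i, (M.mulVec v i)^2) := by
    rw [EuclideanSpace.norm_eq]
    congr 1; apply Finset.sum_congr rfl; intro i _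
    rw [Real.norm_eq_abs, sq_abs]; rfl
  have e2 : ‖x‖ = Real.sqrt (∑ j, (v j)^2) := by
    rw [EuclideanSpace.norm_eq]
    congr 1; apply Finset.sum_congr rfl; intro i _
    rw [Real.norm_eq_abs, sq_abs]; rfl
  rw [e1, e2] at h
  have h2 := pow_le_pow_left₀ (Real.sqrt_nonneg _) h 2
  rw [mul_pow, Real.sq_sqrt (by positivity), Real.sq_sqrt (by positivity)] at h2
  exact h2

set_option maxHeartbeats 1000000 in
theorem stmt_15 {m n k : ℕ} (hk : 0 < k) (ε : ℝ) (hε : 0 < ε)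
    (A Ak : Matrix (Fin m) (Fin n) ℝ)
    (Uk : Matrix (Fin m) (Fin k) ℝ) (Vk : Matrix (Fin n) (Fin k) ℝ)
    (hUk : Ukᵀ * Uk = 1) (hVk : Vkᵀ * Vk = 1)
    (hAkU : Ak = Uk * Ukᵀ * A) (hAkV : Ak = A * (Vk * Vkᵀ))
    (P : Matrix (Fin m) (Fin m) ℝ) (Q : Matrix (Fin n) (Fin n) ℝ)
    (hP : P * P = P ∧ Pᵀ = P) (hQ : Q * Q = Q ∧ Qᵀ = Q)
    (hPSF : spec ((1 - P) * A) ^ 2 ≤ (ε / (k : ℝ)) * frob (A - Ak) ^ 2)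
    (hQSF : spec (A * (1 - Q)) ^ 2 ≤ (ε / (k : ℝ)) * frob (A - Ak) ^ 2) :
    Matrix.trace ((A - Ak)ᵀ * ((1 - P) * (Ak * Q))) ≤ ε * frob (A - Ak) ^ 2 := by
  set R' : Matrix (Fin n) (Fin n) ℝ := 1 - Vk * Vkᵀ with hR'
  set s : ℝ := spec ((1 - P) * A) with hs
  have hsnn : 0 ≤ s := norm_nonneg _
  -- basic projection facts
  have hVVt : (Vk * Vkᵀ)ᵀ = Vk * Vkᵀ := by rw [transpose_mul, transpose_transpose]
  have hR't : R'ᵀ = R' := by rw [hR', transpose_sub, transpose_one, hVVt]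
  have hVV2 : (Vk * Vkᵀ) * (Vk * Vkᵀ) = Vk * Vkᵀ := by
    rw [Matrix.mul_assoc, ← Matrix.mul_assoc Vkᵀ, hVk, Matrix.one_mul]
  have hR'2 : R' * R' = R' := by
    rw [hR', sub_mul, one_mul, mul_sub, mul_one, hVV2, sub_self, sub_zero]
  have hP2 : (1 - P) * (1 - P) = 1 - P := by
    rw [sub_mul, one_mul, mul_sub, mul_one, hP.1, sub_self, sub_zero]
  have h1Pt : (1 - P)ᵀ = 1 - P := by rw [transpose_sub, transpose_one, hP.2]
  have hP2' : ∀ (Z : Matrix (Fin m) (Fin k) ℝ), (1-P)*((1-P)*Z) = (1-P)*Z := by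
    intro Z; rw [← Matrix.mul_assoc, hP2]
  have hAmAk : A - Ak = A * R' := by rw [hAkV, hR', Matrix.mul_sub, Matrix.mul_one]
  -- the two matrices
  set X : Matrix (Fin m) (Fin k) ℝ := ((1-P)*A) * (R' * (Q * Vk)) with hX
  set Y : Matrix (Fin m) (Fin k) ℝ := ((1-P)*A) * Vk with hY
  set M : Matrix (Fin n) (Fin k) ℝ := R' * (Aᵀ * ((1-P) * (A * Vk))) with hM
  set N : Matrix (Fin k) (Fin n) ℝ := Vkᵀ * Q with hN
  have lhs_eq : (A - Ak)ᵀ * ((1 - P) * (Ak * Q)) = M * N := by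
    rw [hAmAk, hAkV, hM, hN]
    simp only [transpose_mul, hR't, Matrix.mul_assoc]
  have rhs_eq : Xᵀ * Y = N * M := by
    rw [hX, hY, hM, hN]
    simp only [transpose_mul, h1Pt, hQ.2, hR't, Matrix.mul_assoc, hP2']
  have trace_eq : Matrix.trace ((A - Ak)ᵀ * ((1 - P) * (Ak * Q)))
      = ∑ i : Fin k, ∑ j : Fin m, X j i * Y j i := by
    rw [lhs_eq, Matrix.trace_mul_comm, ← rhs_eq]
    simp [Matrix.trace, Matrix.diag, Matrix.mul_apply, Matrix.transpose_apply]
  -- per-column bounds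
  have col_bound : ∀ i : Fin k, ∑ j : Fin m, X j i * Y j i ≤ s^2 := by
    intro i
    set e : Fin k → ℝ := Pi.single i 1 with he
    have hVe : Vk.mulVec e = fun j => Vk j i := by
      funext j; simp [he, Matrix.mulVec_single]
    have hunit : (Vk.mulVec e) ⬝ᵥ (Vk.mulVec e) = 1 := by
      have h1 := congrFun (congrFun hVk i) i
      simp only [Matrix.mul_apply, Matrix.transpose_apply, Matrix.one_apply_eq] at h1
      rw [hVe]; simpa [dotProduct] using h1
    -- column of Y
    have hYcol : (fun j => Y j i) = ((1-P)*A).mulVec (Vk.mulVec e) := by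
      funext j
      rw [Matrix.mulVec_mulVec, ← hY]
      simp [he, Matrix.mulVec_single]
    -- column of X
    set w : Fin n → ℝ := R'.mulVec (Q.mulVec (Vk.mulVec e)) with hw
    have hXcol : (fun j => X j i) = ((1-P)*A).mulVec w := by
      have hXe : X.mulVec e = ((1-P)*A).mulVec w := by
        rw [hX, hw]; simp only [Matrix.mulVec_mulVec, Matrix.mul_assoc]
      funext j
      rw [← hXe]
      simp [he, Matrix.mulVec_single]
    have hwle : ∑ t, (w t)^2 ≤ 1 := by
      have c1 := proj_con' hR'2 hR't (Q.mulVec (Vk.mulVec e))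
      have c2 := proj_con' hQ.1 hQ.2 (Vk.mulVec e)
      have : ∑ t, (w t)^2 = w ⬝ᵥ w := by simp [dotProduct, sq]
      rw [this, hw]
      calc R'.mulVec (Q.mulVec (Vk.mulVec e)) ⬝ᵥ R'.mulVec (Q.mulVec (Vk.mulVec e))
          ≤ (Q.mulVec (Vk.mulVec e)) ⬝ᵥ (Q.mulVec (Vk.mulVec e)) := c1
        _ ≤ (Vk.mulVec e) ⬝ᵥ (Vk.mulVec e) := c2
        _ = 1 := hunit
    have hXle : ∑ j, (X j i)^2 ≤ s^2 := by
      have h1 : ∑ j, (X j i)^2 = ∑ j, (((1-P)*A).mulVec w j)^2 := by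
        apply Finset.sum_congr rfl; intro j _; rw [← hXcol]
      rw [h1]
      calc ∑ j, (((1-P)*A).mulVec w j)^2 ≤ s^2 * ∑ t, (w t)^2 := spec_mulVec' _ _
        _ ≤ s^2 * 1 := by exact mul_le_mul_of_nonneg_left hwle (sq_nonneg s)
        _ = s^2 := mul_one _
    have hYle : ∑ j, (Y j i)^2 ≤ s^2 := by
      have hVle : ∑ t, (Vk.mulVec e t)^2 = 1 := by
        have : ∑ t, (Vk.mulVec e t)^2 = (Vk.mulVec e) ⬝ᵥ (Vk.mulVec e) := by
          simp [dotProduct, sq]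
        rw [this, hunit]
      have h1 : ∑ j, (Y j i)^2 = ∑ j, (((1-P)*A).mulVec (Vk.mulVec e) j)^2 := by
        apply Finset.sum_congr rfl; intro j _; rw [← hYcol]
      rw [h1]
      calc ∑ j, (((1-P)*A).mulVec (Vk.mulVec e) j)^2
          ≤ s^2 * ∑ t, (Vk.mulVec e t)^2 := spec_mulVec' _ _
        _ = s^2 := by rw [hVle, mul_one]
    -- Cauchy-Schwarz
    have cs := Finset.sum_mul_sq_le_sq_mul_sq Finset.univ
      (fun j => X j i) (fun j => Y j i)
    have hb : (∑ j : Fin m, X j i * Y j i)^2 ≤ (s^2)^2 := by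
      refine cs.trans ?_
      rw [sq (s^2)]
      exact mul_le_mul hXle hYle (Finset.sum_nonneg fun j _ => sq_nonneg _) (sq_nonneg s)
    calc ∑ j : Fin m, X j i * Y j i
        ≤ |∑ j : Fin m, X j i * Y j i| := le_abs_self _
      _ = Real.sqrt ((∑ j : Fin m, X j i * Y j i)^2) := (Real.sqrt_sq_eq_abs _).symm
      _ ≤ Real.sqrt ((s^2)^2) := Real.sqrt_le_sqrt hb
      _ = s^2 := Real.sqrt_sq (sq_nonneg s)
  -- sum up
  have hk' : (k:ℝ) ≠ 0 := Nat.cast_ne_zero.mpr hk.ne'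
  calc Matrix.trace ((A - Ak)ᵀ * ((1 - P) * (Ak * Q)))
      = ∑ i : Fin k, ∑ j : Fin m, X j i * Y j i := trace_eq
    _ ≤ ∑ _i : Fin k, s^2 := Finset.sum_le_sum (fun i _ => col_bound i)
    _ = (k:ℝ) * s^2 := by simp [Finset.sum_const, mul_comm]
    _ ≤ (k:ℝ) * ((ε / (k:ℝ)) * frob (A - Ak) ^ 2) := by
        exact mul_le_mul_of_nonneg_left hPSF (by positivity)
    _ = ε * frob (A - Ak) ^ 2 := by field_simp
end
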